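/- Let g > 0. There exists a constant C > 0 such that for every integer q ≥ 2 and every k₂ ∈ [1/2 − 1/(2q), 1/2 + 1/(2q)]: all the terms φ(k₂ + l/q, E), l = 0,…,q−1, are well defined for E ∈ [1 − cos 2πk₂, 2], and 0 ≤ Φ_q(k₂, 2) − Φ_q(k₂, 1 − cos 2πk₂) ≤ C (log q)/q. (This is the key estimate showing that for large q there is at most one surface energy band below the edge E = 2 of the volume spectrum.) -/

import Mathlib

/-- `φ(k,E) = (1/π) arctan((1/g)√((E + cos 2πk)² - 1))`. -/
noncomputable def phi (g : ℝ) (k E : ℝ) : ℝ :=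
  (1 / Real.pi) * Real.arctan ((1 / g) * Real.sqrt ((E + Real.cos (2 * Real.pi * k)) ^ 2 - 1))

/-- `Φ_q(k₂,E) = ∑_{l=0}^{q-1} φ(k₂ + l/q, E)`. -/
noncomputable def Phiq (g : ℝ) (q : ℕ) (k₂ E : ℝ) : ℝ :=
  ∑ l ∈ Finset.range q, phi g (k₂ + (l : ℝ) / (q : ℝ)) E

/-!
Write `E₀ = 1 - cos 2πk₂`. As arctan is 1-Lipschitz, the `l`-th summand of the increment is at
most `(√x - √y)/(πg)` with `x - y ≤ 6 (2 - E₀)`, and `2 - E₀ = 2 sin²(π(k₂ - 1/2)) = O(1/q²)`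
because `|k₂ - 1/2| ≤ 1/(2q)`. For `l = 0` use `√x - √y ≤ √(x - y) = O(1/q)`. For `1 ≤ l < q`
use `√x - √y ≤ (x - y)/√x` together with `√x ≥ 2 sin(π(k₂ + l/q - 1/2)) ≥ min(l, q - l)/q`;
the summand is then `O(1/(q min(l, q - l)))`, and the harmonic sum gives `O(log q / q)`.
-/

open Real Finset

lemma arctan_sub_arctan_le {a b : ℝ} (h : b ≤ a) : arctan a - arctan b ≤ a - b := by
  have hmono : Monotone fun x : ℝ => x - arctan x := by
    refine monotone_of_deriv_nonneg (differentiable_id.sub differentiable_arctan) fun x => ?_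
    rw [deriv_fun_sub (f := fun x => x) differentiableAt_id (differentiable_arctan x),
      deriv_id'', Real.deriv_arctan, sub_nonneg]
    exact div_le_one_of_le₀ (by nlinarith) (by positivity)
  linarith [hmono h]

lemma sqrt_sub_sqrt_le_div {x y : ℝ} (hx : 0 < x) (hyx : y ≤ x) :
    √x - √y ≤ (x - y) / √x := by
  have hy : y ≤ √x * √y := by
    rcases le_or_gt y 0 with hy | hy
    · exact hy.trans (by positivity)
    · nlinarith [mul_self_sqrt hy.le, sqrt_le_sqrt hyx, sqrt_nonneg y]
  rw [le_div_iff₀ (sqrt_pos.2 hx)]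
  nlinarith [mul_self_sqrt hx.le]

lemma sqrt_sub_sqrt_le_sqrt_sub {x y : ℝ} (hyx : y ≤ x) : √x - √y ≤ √(x - y) := by
  rcases le_or_gt y 0 with hy | hy
  · rw [sqrt_eq_zero'.2 hy, sub_zero]
    exact sqrt_le_sqrt (by linarith)
  · rw [sub_le_iff_le_add, sqrt_le_left (by positivity)]
    nlinarith [sq_sqrt (sub_nonneg.2 hyx), sq_sqrt hy.le,
      mul_nonneg (sqrt_nonneg (x - y)) (sqrt_nonneg y)]

lemma two_mul_min_le_sin_pi_mul {s : ℝ} (h0 : 0 ≤ s) (h1 : s ≤ 1) :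
    2 * min s (1 - s) ≤ sin (π * s) := by
  have key : ∀ t : ℝ, 0 ≤ t → t ≤ 1 / 2 → 2 * t ≤ sin (π * t) := fun t ht0 ht1 => by
    have := mul_le_sin (x := π * t) (by positivity) (by nlinarith [pi_pos])
    rwa [div_mul_eq_mul_div, mul_div_assoc, mul_div_cancel_left₀ _ pi_pos.ne'] at this
  rcases le_total s (1 / 2) with hs | hs
  · rw [min_eq_left (by linarith)]
    exact key s h0 hs
  · rw [min_eq_right (by linarith), ← sin_pi_sub, ← mul_one_sub]
    exact key (1 - s) (by linarith) (by linarith)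

lemma sum_Ico_one_div_le_one_add_log (q : ℕ) :
    ∑ l ∈ Ico 1 q, 1 / (l : ℝ) ≤ 1 + log q := by
  calc ∑ l ∈ Ico 1 q, 1 / (l : ℝ) ≤ ∑ l ∈ Icc 1 q, 1 / (l : ℝ) :=
        sum_le_sum_of_subset_of_nonneg Ico_subset_Icc_self fun _ _ _ => by positivity
    _ = harmonic q := by simp [harmonic_eq_sum_Icc]
    _ ≤ 1 + log q := harmonic_le_one_add_log q

lemma one_add_cos_two_pi_mul (k : ℝ) : 1 + cos (2 * π * k) = 2 * sin (π * (k - 1 / 2)) ^ 2 := by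
  rw [show 2 * π * k = 2 * (π * (k - 1 / 2)) + π by ring, cos_add_pi, cos_two_mul, cos_sq']
  ring

lemma one_add_cos_two_pi_mul_le (k : ℝ) : 1 + cos (2 * π * k) ≤ 2 * π ^ 2 * (k - 1 / 2) ^ 2 := by
  rw [one_add_cos_two_pi_mul]
  nlinarith [sin_sq_le_sq (x := π * (k - 1 / 2))]

lemma sq_add_le_sq_two_add {E c : ℝ} (hE0 : 0 ≤ E) (hE2 : E ≤ 2) (hc : -1 ≤ c) :
    (E + c) ^ 2 ≤ (2 + c) ^ 2 := by
  nlinarith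

lemma sq_two_add_sub_sq_add_le {E c : ℝ} (hE2 : E ≤ 2) (hc : c ≤ 1) :
    (2 + c) ^ 2 - (E + c) ^ 2 ≤ 6 * (2 - E) := by
  nlinarith

lemma min_div_le_sin_pi_mul {l q δ : ℝ} (hl : 1 ≤ l) (hlq : l + 1 ≤ q)
    (hδ : |δ| ≤ 1 / (2 * q)) : min l (q - l) / q ≤ sin (π * (δ + l / q)) := by
  have hq : 0 < q := by linarith
  obtain ⟨hδlo, hδhi⟩ : -1 ≤ 2 * q * δ ∧ 2 * q * δ ≤ 1 := by
    refine abs_le.1 ?_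
    rwa [abs_mul, abs_of_pos (by positivity), mul_comm, ← le_div_iff₀ (by positivity)]
  set s := δ + l / q with hs
  have hsmul : s * q = δ * q + l := by rw [hs]; field_simp
  have hleft : l / q ≤ 2 * s := by rw [div_le_iff₀ hq]; linarith
  have hright : (q - l) / q ≤ 2 * (1 - s) := by rw [div_le_iff₀ hq]; linarith
  have hl0 : 0 ≤ l / q := by positivity
  have hql0 : 0 ≤ (q - l) / q := div_nonneg (by linarith) hq.le
  calc min l (q - l) / q ≤ 2 * min s (1 - s) := by
        rw [mul_min_of_nonneg _ _ zero_le_two]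
        exact le_min ((div_le_div_of_nonneg_right (min_le_left _ _) hq.le).trans hleft)
          ((div_le_div_of_nonneg_right (min_le_right _ _) hq.le).trans hright)
    _ ≤ sin (π * s) := two_mul_min_le_sin_pi_mul (by linarith) (by linarith)

section phi

variable {g k E : ℝ}

lemma phi_le_phi_two (hg : 0 ≤ g) (hE0 : 0 ≤ E) (hE2 : E ≤ 2) : phi g k E ≤ phi g k 2 := by
  unfold phi
  have hsq := sq_add_le_sq_two_add hE0 hE2 (neg_one_le_cos (2 * π * k))
  gcongr

lemma phi_two_sub_le (hg : 0 < g) (hE0 : 0 ≤ E) (hE2 : E ≤ 2) :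
    phi g k 2 - phi g k E ≤
      (√((2 + cos (2 * π * k)) ^ 2 - 1) - √((E + cos (2 * π * k)) ^ 2 - 1)) / (π * g) := by
  have hsq := sq_add_le_sq_two_add hE0 hE2 (neg_one_le_cos (2 * π * k))
  have harctan := arctan_sub_arctan_le (a := 1 / g * √((2 + cos (2 * π * k)) ^ 2 - 1))
    (b := 1 / g * √((E + cos (2 * π * k)) ^ 2 - 1)) (by gcongr)
  calc phi g k 2 - phi g k E
      = 1 / π * (arctan (1 / g * √((2 + cos (2 * π * k)) ^ 2 - 1))
          - arctan (1 / g * √((E + cos (2 * π * k)) ^ 2 - 1))) := by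
        rw [phi, phi, mul_sub]
    _ ≤ 1 / π * (1 / g * √((2 + cos (2 * π * k)) ^ 2 - 1)
          - 1 / g * √((E + cos (2 * π * k)) ^ 2 - 1)) :=
        mul_le_mul_of_nonneg_left harctan (by positivity)
    _ = _ := by field_simp

lemma phi_two_sub_le_sqrt (hg : 0 < g) (hE0 : 0 ≤ E) (hE2 : E ≤ 2) :
    phi g k 2 - phi g k E ≤ √(6 * (2 - E)) / (π * g) := by
  have hsq := sq_add_le_sq_two_add hE0 hE2 (neg_one_le_cos (2 * π * k))
  have hdiff := sq_two_add_sub_sq_add_le (c := cos (2 * π * k)) hE2 (cos_le_one _)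
  refine (phi_two_sub_le hg hE0 hE2).trans ?_
  gcongr
  exact (sqrt_sub_sqrt_le_sqrt_sub (by linarith)).trans (sqrt_le_sqrt (by linarith))

lemma phi_two_sub_le_div_sin (hg : 0 < g) (hE0 : 0 ≤ E) (hE2 : E ≤ 2)
    (hsin : 0 < sin (π * (k - 1 / 2))) :
    phi g k 2 - phi g k E ≤ 3 * (2 - E) / (π * g * sin (π * (k - 1 / 2))) := by
  set c := cos (2 * π * k)
  have hsqrt : 2 * sin (π * (k - 1 / 2)) ≤ √((2 + c) ^ 2 - 1) := by
    refine le_sqrt_of_sq_le ?_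
    have hcos := one_add_cos_two_pi_mul k
    nlinarith [neg_one_le_cos (2 * π * k)]
  have hsq := sq_add_le_sq_two_add (c := c) hE0 hE2 (neg_one_le_cos _)
  have hdiff := sq_two_add_sub_sq_add_le (c := c) hE2 (cos_le_one _)
  have hx : 0 < (2 + c) ^ 2 - 1 := sqrt_pos.1 (by linarith)
  calc phi g k 2 - phi g k E ≤ (√((2 + c) ^ 2 - 1) - √((E + c) ^ 2 - 1)) / (π * g) :=
        phi_two_sub_le hg hE0 hE2
    _ ≤ ((2 + c) ^ 2 - (E + c) ^ 2) / √((2 + c) ^ 2 - 1) / (π * g) := by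
        gcongr
        have := sqrt_sub_sqrt_le_div hx (y := (E + c) ^ 2 - 1) (by linarith)
        rwa [sub_sub_sub_cancel_right] at this
    _ ≤ 6 * (2 - E) / (2 * sin (π * (k - 1 / 2))) / (π * g) := by
        gcongr
    _ = 3 * (2 - E) / (π * g * sin (π * (k - 1 / 2))) := by
        field_simp
        ring

lemma phi_two_sub_le_of_two_sub_le {q : ℝ} (hg : 0 < g) (hq : 0 < q) (hE0 : 0 ≤ E)
    (hE2 : E ≤ 2) (hη : 2 - E ≤ π ^ 2 / (2 * q ^ 2)) :
    phi g k 2 - phi g k E ≤ 2 / (g * q) :=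
  calc phi g k 2 - phi g k E ≤ √(6 * (2 - E)) / (π * g) := phi_two_sub_le_sqrt hg hE0 hE2
    _ ≤ 2 * π / q / (π * g) := by
      gcongr
      rw [sqrt_le_left (by positivity)]
      calc 6 * (2 - E) ≤ 6 * (π ^ 2 / (2 * q ^ 2)) := by gcongr
        _ ≤ (2 * π / q) ^ 2 := by rw [div_pow]; field_simp; nlinarith [pi_pos]
    _ = 2 / (g * q) := by field_simp

lemma phi_add_div_two_sub_le {q l : ℝ} (hg : 0 < g) (hE0 : 0 ≤ E) (hE2 : E ≤ 2)
    (hη : 2 - E ≤ π ^ 2 / (2 * q ^ 2)) (hl : 1 ≤ l) (hlq : l + 1 ≤ q)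
    (hk : |k - 1 / 2| ≤ 1 / (2 * q)) :
    phi g (k + l / q) 2 - phi g (k + l / q) E ≤ 3 * π / (2 * g * q) * (1 / min l (q - l)) := by
  have hsin := min_div_le_sin_pi_mul hl hlq hk
  rw [show k - 1 / 2 + l / q = k + l / q - 1 / 2 by ring] at hsin
  have hmin : 0 < min l (q - l) := lt_min (by linarith) (by linarith)
  calc phi g (k + l / q) 2 - phi g (k + l / q) E
      ≤ 3 * (2 - E) / (π * g * sin (π * (k + l / q - 1 / 2))) :=
        phi_two_sub_le_div_sin hg hE0 hE2 ((div_pos hmin (by linarith)).trans_le hsin)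
    _ ≤ 3 * (π ^ 2 / (2 * q ^ 2)) / (π * g * (min l (q - l) / q)) := by
        have : 0 < q := by linarith
        gcongr
    _ = 3 * π / (2 * g * q) * (1 / min l (q - l)) := by field_simp

end phi

lemma sum_one_div_min_le (q : ℕ) :
    ∑ l ∈ Ico 1 q, 1 / min (l : ℝ) (q - l) ≤ 2 * (1 + log q) := by
  calc ∑ l ∈ Ico 1 q, 1 / min (l : ℝ) (q - l)
      ≤ ∑ l ∈ Ico 1 q, (1 / (l : ℝ) + 1 / ((q - l : ℕ) : ℝ)) := by
        refine sum_le_sum fun l hl => ?_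
        obtain ⟨hl1, hlq⟩ := mem_Ico.1 hl
        have hl0 : (0 : ℝ) < l := by positivity
        have hql0 : (0 : ℝ) < (q - l : ℕ) := by exact_mod_cast Nat.sub_pos_of_lt hlq
        rw [Nat.cast_sub hlq.le] at hql0 ⊢
        rcases min_cases (l : ℝ) (q - l) with ⟨h, _⟩ | ⟨h, _⟩ <;> rw [h] <;>
          linarith [one_div_pos.2 hl0, one_div_pos.2 hql0]
    _ = 2 * ∑ l ∈ Ico 1 q, 1 / (l : ℝ) := by
        rw [sum_add_distrib, sum_Ico_reflect (fun j => 1 / (j : ℝ)) 1 (Nat.le_succ q)]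
        simp [two_mul]
    _ ≤ 2 * (1 + log q) := by gcongr; exact sum_Ico_one_div_le_one_add_log q

lemma Phiq_le_Phiq_two {g : ℝ} (hg : 0 ≤ g) (q : ℕ) (k₂ : ℝ) {E : ℝ} (hE0 : 0 ≤ E)
    (hE2 : E ≤ 2) : Phiq g q k₂ E ≤ Phiq g q k₂ 2 :=
  sum_le_sum fun _ _ => phi_le_phi_two hg hE0 hE2

lemma Phiq_two_sub_band_edge_le {g : ℝ} (hg : 0 < g) {q : ℕ} (hq : 2 ≤ q) {k₂ : ℝ}
    (hk : |k₂ - 1 / 2| ≤ 1 / (2 * q)) :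
    Phiq g q k₂ 2 - Phiq g q k₂ (1 - cos (2 * π * k₂)) ≤
      (2 + 3 * π * (1 + log q)) / (g * q) := by
  set E₀ := 1 - cos (2 * π * k₂)
  have hq0 : (0 : ℝ) < q := by positivity
  have hE0 : 0 ≤ E₀ := by linarith [cos_le_one (2 * π * k₂)]
  have hE2 : E₀ ≤ 2 := by linarith [neg_one_le_cos (2 * π * k₂)]
  have hη : 2 - E₀ ≤ π ^ 2 / (2 * q ^ 2) :=
    calc 2 - E₀ = 1 + cos (2 * π * k₂) := by ring
      _ ≤ 2 * π ^ 2 * (k₂ - 1 / 2) ^ 2 := one_add_cos_two_pi_mul_le k₂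
      _ ≤ 2 * π ^ 2 * (1 / (2 * q)) ^ 2 :=
        mul_le_mul_of_nonneg_left (sq_le_sq' (abs_le.1 hk).1 (abs_le.1 hk).2) (by positivity)
      _ = π ^ 2 / (2 * q ^ 2) := by field_simp
  rw [Phiq, Phiq, ← sum_sub_distrib, range_eq_Ico, sum_eq_sum_Ico_succ_bot (by omega)]
  simp only [Nat.cast_zero, zero_div, add_zero]
  calc phi g k₂ 2 - phi g k₂ E₀ + ∑ l ∈ Ico 1 q, (phi g (k₂ + l / q) 2 - phi g (k₂ + l / q) E₀)
      ≤ 2 / (g * q) + ∑ l ∈ Ico 1 q, 3 * π / (2 * g * q) * (1 / min (l : ℝ) (q - l)) :=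
        add_le_add (phi_two_sub_le_of_two_sub_le hg hq0 hE0 hE2 hη) <| sum_le_sum fun l hl =>
          phi_add_div_two_sub_le hg hE0 hE2 hη (by exact_mod_cast (mem_Ico.1 hl).1)
            (by exact_mod_cast (mem_Ico.1 hl).2) hk
    _ ≤ 2 / (g * q) + 3 * π / (2 * g * q) * (2 * (1 + log q)) := by
        rw [← mul_sum]
        gcongr
        exact sum_one_div_min_le q
    _ = (2 + 3 * π * (1 + log q)) / (g * q) := by field_simp

/-- for large `q` the total phase increment between the band edge
`E = 1 - cos 2πk₂` and `E = 2` is at most `C (log q)/q`, uniformly in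
`k₂ ∈ [1/2 - 1/(2q), 1/2 + 1/(2q)]`; hence for large `q` there is at most one
surface energy band below the edge `E = 2`. -/
theorem phase_increment_log_q_over_q (g : ℝ) (hg : 0 < g) :
    ∃ C : ℝ, 0 < C ∧ ∀ q : ℕ, 2 ≤ q →
      ∀ k₂ : ℝ, k₂ ∈ Set.Icc (1/2 - 1/(2*(q:ℝ))) (1/2 + 1/(2*(q:ℝ))) →
        0 ≤ Phiq g q k₂ 2 - Phiq g q k₂ (1 - Real.cos (2 * Real.pi * k₂)) ∧
        Phiq g q k₂ 2 - Phiq g q k₂ (1 - Real.cos (2 * Real.pi * k₂))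
          ≤ C * Real.log q / (q : ℝ) := by
  refine ⟨40 / g, by positivity, fun q hq k₂ ⟨hk₁, hk₂⟩ => ⟨?_, ?_⟩⟩
  · exact sub_nonneg.2 (Phiq_le_Phiq_two hg.le q k₂
      (by linarith [cos_le_one (2 * π * k₂)]) (by linarith [neg_one_le_cos (2 * π * k₂)]))
  · have hk : |k₂ - 1 / 2| ≤ 1 / (2 * q) := abs_le.2 ⟨by linarith, by linarith⟩
    have hlog : 1 / 2 ≤ log q := by
      have : log 2 ≤ log q := log_le_log two_pos (by exact_mod_cast hq)
      linarith [log_two_gt_d9]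
    calc _ ≤ (2 + 3 * π * (1 + log q)) / (g * q) := Phiq_two_sub_band_edge_le hg hq hk
      _ ≤ 40 * log q / (g * q) := by
        gcongr
        nlinarith [pi_lt_four]
      _ = 40 / g * log q / q := by field_simp
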